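/- Let P be a finite (3+1)-free poset. A P-array T is a highest weight element of the P-array crystal (i.e., e_r(T) = 0 for all r ≥ 1) if and only if T is a P-tableau. -/

import Mathlib

/-- Two elements of a poset are incomparable. -/
def Incomp {α : Type*} [Preorder α] (x y : α) : Prop := ¬ x ≤ y ∧ ¬ y ≤ x

/-- A poset is (3+1)-free. -/
def ThreePlusOneFree (α : Type*) [Preorder α] : Prop :=
  ¬ ∃ a b c d : α, a < b ∧ b < c ∧ Incomp d a ∧ Incomp d b ∧ Incomp d c

/-- A `P`-array: an indexing of the elements of `P` by positions `(i,j)` (rows and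
columns, indexed from 0) in which every element appears exactly once and each row
is increasing from left to right with no gaps. -/
structure PArray (P : Type*) [PartialOrder P] where
  entry : ℕ → ℕ → Option P
  exists_unique : ∀ x : P, ∃! ij : ℕ × ℕ, entry ij.1 ij.2 = some x
  row_chain : ∀ i j x, entry i (j + 1) = some x → ∃ y, entry i j = some y ∧ y < x

/-- `x` is an entry of row `i` of the `P`-array `T`. -/
def InRow {P : Type*} [PartialOrder P] (T : PArray P) (i : ℕ) (x : P) : Prop :=
  ∃ j, T.entry i j = some x

/-- A weak `r` alignment of rows `r` and `r+1` of a `P`-array `T`, recorded by the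
column assignment `γ` of the elements of those two rows (columns indexed from 0):
(1) columns strictly increase along each of the two rows; (2) no occupied column is
preceded by an empty one; (3) if `x <_P y` with `x` in row `r+1` and `y` in row `r`
then `x` is strictly left of `y`; (4) if an element lies in column `c` and column
`c+1` is nonempty then some greater element lies in column `c+1`. -/
def WeakAlignRow {P : Type*} [PartialOrder P] (T : PArray P) (r : ℕ) (γ : P → ℕ) :
    Prop :=
  (∀ x y, InRow T r x → InRow T r y → x < y → γ x < γ y) ∧
  (∀ x y, InRow T (r + 1) x → InRow T (r + 1) y → x < y → γ x < γ y) ∧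
  (∀ c : ℕ, 0 < c → (∃ x, (InRow T r x ∨ InRow T (r + 1) x) ∧ γ x = c) →
    ∃ x, (InRow T r x ∨ InRow T (r + 1) x) ∧ γ x = c - 1) ∧
  (∀ x y, InRow T (r + 1) x → InRow T r y → x < y → γ x < γ y) ∧
  (∀ x, (InRow T r x ∨ InRow T (r + 1) x) →
    (∃ z, (InRow T r z ∨ InRow T (r + 1) z) ∧ γ z = γ x + 1) →
    ∃ y, (InRow T r y ∨ InRow T (r + 1) y) ∧ γ y = γ x + 1 ∧ x < y)

/-!
For two increasing rows `A 0 < ⋯ < A (m - 1)` and `B 0 < ⋯ < B (n - 1)`, the minimal weak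
alignment is built greedily, column by column: `nextStep` decides whether the next column holds
the next entry of `A`, of `B`, or both, by looking one column ahead. By induction from the right
end of the rows, every weak alignment must place `A k` left of `B l` (resp. right of it) whenever
the greedy step at `(k, l)` puts `A k` (resp. `B l`) alone, so the greedy alignment is pointwise
minimal; in particular the `r` alignment exists.

If the rows form a tableau (`B i ≮ A i` and `n ≤ m`), the greedy walk never puts `B l` alone,
so every column with an entry of `B` contains an entry of `A`: `e_r` vanishes. Conversely, if
some weak alignment has every `B l` in a column with some `A j`, then `j ≥ l` because columns
increase along both rows, and `B l < A l ≤ A j` would force `B l` strictly left of `A j`.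
-/

namespace RowAlignment

section Crossing

variable {f : ℕ → ℕ} {j j' c : ℕ}

/-- For a counter `f` that starts at `0` and moves by steps `0` or `1`, the unique time `c`
with `f c = j` and `f (c + 1) = j + 1`. -/
noncomputable def crossing (f : ℕ → ℕ) (j : ℕ) : ℕ := sInf {c | j < f c} - 1

lemma crossing_spec (hf0 : f 0 = 0) (hstep : ∀ c, f (c + 1) ≤ f c + 1) (hj : ∃ c, j < f c) :
    f (crossing f j) = j ∧ f (crossing f j + 1) = j + 1 := by
  have hmem : j < f (sInf {c | j < f c}) := Nat.sInf_mem hj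
  have hprev : ¬ j < f (sInf {c | j < f c} - 1) := Nat.notMem_of_lt_sInf (s := {c | j < f c}) (by
    rcases Nat.eq_zero_or_pos (sInf {c | j < f c}) with h | h
    · rw [h, hf0] at hmem; omega
    · omega)
  rw [crossing]
  generalize sInf {c | j < f c} = c₀ at hmem hprev
  obtain _ | c₀ := c₀
  · omega
  · have := hstep c₀
    simp only [Nat.add_sub_cancel] at hprev ⊢
    omega

lemma crossing_of_succ (hf : Monotone f) (h : f (c + 1) = f c + 1) : crossing f (f c) = c := by
  have hle : sInf {c' | f c < f c'} ≤ c + 1 := Nat.sInf_le (show f c < f (c + 1) by omega)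
  have hge : c + 1 ≤ sInf {c' | f c < f c'} := by
    by_contra! hlt
    have hmem : f c < f (sInf {c' | f c < f c'}) :=
      Nat.sInf_mem (s := {c' | f c < f c'}) ⟨c + 1, show f c < f (c + 1) by omega⟩
    exact (hf (Nat.le_of_lt_succ hlt)).not_gt hmem
  rw [crossing]
  omega

lemma crossing_lt_crossing (hf : Monotone f) (hf0 : f 0 = 0) (hstep : ∀ c, f (c + 1) ≤ f c + 1)
    (hjj : j < j') (hj' : ∃ c, j' < f c) : crossing f j < crossing f j' := by
  have h := crossing_spec hf0 hstep (j := j) (hj'.imp fun _ h => hjj.trans h)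
  have h' := crossing_spec hf0 hstep hj'
  by_contra! hle
  have := hf hle
  omega

end Crossing

section WeakAlignment

variable {P : Type*} [PartialOrder P] (A B : ℕ → P) (m n : ℕ)

def Occupied (colA colB : ℕ → ℕ) (c : ℕ) : Prop :=
  (∃ j < m, colA j = c) ∨ (∃ l < n, colB l = c)

def HasAbove (colA colB : ℕ → ℕ) (c : ℕ) (x : P) : Prop :=
  (∃ j < m, colA j = c ∧ x < A j) ∨ (∃ l < n, colB l = c ∧ x < B l)

/-- `WeakAlignRow` for two rows `A 0, …, A (m - 1)` (upper) and `B 0, …, B (n - 1)` (lower),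
recorded by the columns of their entries. -/
structure WeakAlignment where
  colA : ℕ → ℕ
  colB : ℕ → ℕ
  strictMonoOn_colA : StrictMonoOn colA (Set.Iio m)
  strictMonoOn_colB : StrictMonoOn colB (Set.Iio n)
  occupied_pred : ∀ c, 0 < c → Occupied m n colA colB c → Occupied m n colA colB (c - 1)
  colB_lt_colA : ∀ l < n, ∀ j < m, B l < A j → colB l < colA j
  hasAbove_colA : ∀ j < m, Occupied m n colA colB (colA j + 1) →
    HasAbove A B m n colA colB (colA j + 1) (A j)
  hasAbove_colB : ∀ l < n, Occupied m n colA colB (colB l + 1) →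
    HasAbove A B m n colA colB (colB l + 1) (B l)

variable {A B m n}

namespace WeakAlignment

variable (W : WeakAlignment A B m n)

lemma occupied_of_le {c e : ℕ} (h : Occupied m n W.colA W.colB c) (he : e ≤ c) :
    Occupied m n W.colA W.colB e := by
  induction c, he using Nat.le_induction with
  | base => exact h
  | succ c _ ih => exact ih (W.occupied_pred (c + 1) c.succ_pos h)

lemma occupied_of_le_colA {j c : ℕ} (hj : j < m) (hc : c ≤ W.colA j) :
    Occupied m n W.colA W.colB c :=
  W.occupied_of_le (Or.inl ⟨j, hj, rfl⟩) hc

lemma occupied_of_le_colB {l c : ℕ} (hl : l < n) (hc : c ≤ W.colB l) :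
    Occupied m n W.colA W.colB c :=
  W.occupied_of_le (Or.inr ⟨l, hl, rfl⟩) hc

lemma eq_succ_of_colA_le {j j' : ℕ} (hjj : j < j') (hj' : j' < m)
    (h : W.colA j' ≤ W.colA j + 1) : j' = j + 1 := by
  by_contra hne
  have h₁ := W.strictMonoOn_colA (Set.mem_Iio.2 (by omega)) (Set.mem_Iio.2 (by omega))
    (show j < j + 1 by omega)
  have h₂ := W.strictMonoOn_colA (Set.mem_Iio.2 (by omega)) (Set.mem_Iio.2 hj')
    (show j + 1 < j' by omega)
  omega

lemma eq_succ_of_colB_le {l l' : ℕ} (hll : l < l') (hl' : l' < n)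
    (h : W.colB l' ≤ W.colB l + 1) : l' = l + 1 := by
  by_contra hne
  have h₁ := W.strictMonoOn_colB (Set.mem_Iio.2 (by omega)) (Set.mem_Iio.2 (by omega))
    (show l < l + 1 by omega)
  have h₂ := W.strictMonoOn_colB (Set.mem_Iio.2 (by omega)) (Set.mem_Iio.2 hl')
    (show l + 1 < l' by omega)
  omega

end WeakAlignment

end WeakAlignment

inductive Step
  | top
  | bot
  | both

section NextStep

variable {P : Type*} [PartialOrder P] (A B : ℕ → P) (m n : ℕ)

open Classical in
/-- The column filled when `A 0, …, A (k - 1)` and `B 0, …, B (l - 1)` are already placed: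
`A k` alone (`top`), `B l` alone (`bot`) or both. `B l` goes first if `B l < A k`; otherwise the
two share a column unless the column decided next would not contain an element above each of
them, in which case `A k` goes first, except when `B l` alone comes next and `A k ≮ B l`. -/
noncomputable def nextStep : ℕ → ℕ → Step
  | k, l =>
    if l < n then
      if k < m then
        if B l < A k then .bot
        else if (nextStep (k + 1) (l + 1) = .top ∧ k + 1 < m ∧ ¬ B l < A (k + 1)) ∨
                (nextStep (k + 1) (l + 1) = .bot ∧ ¬ A k < B (l + 1)) then
          (if nextStep (k + 1) l = .bot ∧ ¬ A k < B l then .bot else .top)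
        else .both
      else .bot
    else .top
termination_by k l => (m - k) + (n - l)

def Blocked (k l : ℕ) : Prop :=
  (nextStep A B m n (k + 1) (l + 1) = .top ∧ k + 1 < m ∧ ¬ B l < A (k + 1)) ∨
  (nextStep A B m n (k + 1) (l + 1) = .bot ∧ ¬ A k < B (l + 1))

variable {A B m n} {k l : ℕ}

lemma nextStep_cases (k l : ℕ) :
    (n ≤ l ∧ nextStep A B m n k l = .top) ∨
    (l < n ∧ m ≤ k ∧ nextStep A B m n k l = .bot) ∨
    (l < n ∧ k < m ∧ B l < A k ∧ nextStep A B m n k l = .bot) ∨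
    (l < n ∧ k < m ∧ ¬ B l < A k ∧ ¬ Blocked A B m n k l ∧
      nextStep A B m n k l = .both) ∨
    (l < n ∧ k < m ∧ ¬ B l < A k ∧ Blocked A B m n k l ∧
      ¬ (nextStep A B m n (k + 1) l = .bot ∧ ¬ A k < B l) ∧ nextStep A B m n k l = .top) ∨
    (l < n ∧ k < m ∧ ¬ B l < A k ∧ Blocked A B m n k l ∧
      nextStep A B m n (k + 1) l = .bot ∧ ¬ A k < B l ∧ nextStep A B m n k l = .bot) := by
  rw [nextStep]
  by_cases hl : l < n
  · by_cases hk : k < m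
    · by_cases hlt : B l < A k
      · simp [hl, hk, hlt]
      · by_cases hbl : Blocked A B m n k l
        all_goals simp only [Blocked] at hbl ⊢
        · by_cases hbot : nextStep A B m n (k + 1) l = .bot ∧ ¬ A k < B l <;>
            simp [hl, hk, hlt, hbl, hbot]
        · simp [hl, hk, hlt, hbl]
    · simp [hl, hk, Nat.le_of_not_lt]
  · simp [hl, Nat.le_of_not_lt]

lemma nextStep_of_le (h : n ≤ l) : nextStep A B m n k l = .top := by
  rw [nextStep]; simp [Nat.not_lt.2 h]

lemma lt_of_nextStep_eq_bot (h : nextStep A B m n k l = .bot) : l < n := by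
  by_contra hl
  rw [nextStep_of_le (Nat.le_of_not_lt hl)] at h
  cases h

lemma of_nextStep_eq_top (h : nextStep A B m n k l = .top) (hl : l < n) :
    k < m ∧ ¬ B l < A k ∧ Blocked A B m n k l ∧
      ¬ (nextStep A B m n (k + 1) l = .bot ∧ ¬ A k < B l) := by
  rcases nextStep_cases (A := A) (B := B) (m := m) (n := n) k l with
    ⟨h1, _⟩ | ⟨-, -, h'⟩ | ⟨-, -, -, h'⟩ | ⟨-, -, -, -, h'⟩ |
    ⟨-, h2, h3, h4, h5, -⟩ | ⟨-, -, -, -, -, -, h'⟩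
  all_goals first | omega | (rw [h'] at h; cases h) | exact ⟨h2, h3, h4, h5⟩

lemma of_nextStep_eq_bot (h : nextStep A B m n k l = .bot) (hk : k < m) :
    B l < A k ∨
      (¬ B l < A k ∧ Blocked A B m n k l ∧ nextStep A B m n (k + 1) l = .bot ∧
        ¬ A k < B l) := by
  rcases nextStep_cases (A := A) (B := B) (m := m) (n := n) k l with
    ⟨-, h'⟩ | ⟨-, h2, -⟩ | ⟨-, -, h3, -⟩ | ⟨-, -, -, -, h'⟩ |
    ⟨-, -, -, -, -, h'⟩ | ⟨-, -, h3, h4, h5, h6, -⟩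
  all_goals first
    | omega | (rw [h'] at h; cases h) | exact Or.inl h3 | exact Or.inr ⟨h3, h4, h5, h6⟩

lemma of_nextStep_eq_both (h : nextStep A B m n k l = .both) :
    l < n ∧ k < m ∧ ¬ B l < A k ∧ ¬ Blocked A B m n k l := by
  rcases nextStep_cases (A := A) (B := B) (m := m) (n := n) k l with
    ⟨-, h'⟩ | ⟨-, -, h'⟩ | ⟨-, -, -, h'⟩ | ⟨h1, h2, h3, h4, -⟩ |
    ⟨-, -, -, -, -, h'⟩ | ⟨-, -, -, -, -, -, h'⟩
  all_goals first | (rw [h'] at h; cases h) | exact ⟨h1, h2, h3, h4⟩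

lemma of_nextStep_ne_bot (h : nextStep A B m n k l ≠ .bot) (hl : l < n) :
    k < m ∧ ¬ B l < A k := by
  rcases nextStep_cases (A := A) (B := B) (m := m) (n := n) k l with
    ⟨h1, -⟩ | ⟨-, -, h'⟩ | ⟨-, -, -, h'⟩ | ⟨-, h2, h3, -⟩ | ⟨-, h2, h3, -⟩ |
    ⟨-, -, -, -, -, -, h'⟩
  all_goals first | omega | exact absurd h' h | exact ⟨h2, h3⟩

end NextStep

def Step.advance : Step → ℕ × ℕ → ℕ × ℕ
  | .top, s => (s.1 + 1, s.2)
  | .bot, s => (s.1, s.2 + 1)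
  | .both, s => (s.1 + 1, s.2 + 1)

section Walk

variable {P : Type*} [PartialOrder P] (A B : ℕ → P) (m n : ℕ)

noncomputable def walkStep (s : ℕ × ℕ) : ℕ × ℕ :=
  if m ≤ s.1 ∧ n ≤ s.2 then s else (nextStep A B m n s.1 s.2).advance s

/-- The numbers of entries of `A` and of `B` placed in the first `c` columns of the greedy
alignment. -/
noncomputable def walk (c : ℕ) : ℕ × ℕ := (walkStep A B m n)^[c] (0, 0)

noncomputable def walkColA (j : ℕ) : ℕ := crossing (fun c => (walk A B m n c).1) j

noncomputable def walkColB (l : ℕ) : ℕ := crossing (fun c => (walk A B m n c).2) l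

variable {A B m n} {c : ℕ}

local notation "ω" => walk A B m n

lemma walk_succ (c : ℕ) : ω (c + 1) = walkStep A B m n (ω c) :=
  Function.iterate_succ_apply' _ _ _

lemma walk_succ_of_done (h : m ≤ (ω c).1 ∧ n ≤ (ω c).2) : ω (c + 1) = ω c := by
  rw [walk_succ, walkStep, if_pos h]

lemma walk_succ_of_not_done (h : ¬ (m ≤ (ω c).1 ∧ n ≤ (ω c).2)) :
    ω (c + 1) = (nextStep A B m n (ω c).1 (ω c).2).advance (ω c) := by
  rw [walk_succ, walkStep, if_neg h]

lemma walk_le (c : ℕ) : (ω c).1 ≤ m ∧ (ω c).2 ≤ n := by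
  induction c with
  | zero => simp [walk]
  | succ c ih =>
    by_cases hd : m ≤ (ω c).1 ∧ n ≤ (ω c).2
    · rwa [walk_succ_of_done hd]
    rw [walk_succ_of_not_done hd]
    rcases hs : nextStep A B m n (ω c).1 (ω c).2
    · by_cases hl : (ω c).2 < n
      · have := (of_nextStep_eq_top hs hl).1
        simp only [Step.advance]; omega
      · simp only [Step.advance]; omega
    · have := lt_of_nextStep_eq_bot hs
      simp only [Step.advance]; omega
    · have := of_nextStep_eq_both hs
      simp only [Step.advance]; omega

lemma walk_succ_le (c : ℕ) :
    (ω c).1 ≤ (ω (c + 1)).1 ∧ (ω (c + 1)).1 ≤ (ω c).1 + 1 ∧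
      (ω c).2 ≤ (ω (c + 1)).2 ∧ (ω (c + 1)).2 ≤ (ω c).2 + 1 := by
  by_cases hd : m ≤ (ω c).1 ∧ n ≤ (ω c).2
  · rw [walk_succ_of_done hd]; omega
  · rw [walk_succ_of_not_done hd]
    cases nextStep A B m n (ω c).1 (ω c).2 <;> simp [Step.advance]

lemma walk_succ_eq_advance (h : ω (c + 1) ≠ ω c) :
    ω (c + 1) = (nextStep A B m n (ω c).1 (ω c).2).advance (ω c) := by
  by_cases hd : m ≤ (ω c).1 ∧ n ≤ (ω c).2
  · exact absurd (walk_succ_of_done hd) h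
  · exact walk_succ_of_not_done hd

lemma monotone_walk_fst : Monotone fun c => (ω c).1 :=
  monotone_nat_of_le_succ fun c => (walk_succ_le c).1

lemma monotone_walk_snd : Monotone fun c => (ω c).2 :=
  monotone_nat_of_le_succ fun c => (walk_succ_le c).2.2.1

lemma walk_eq_end_or_le (c : ℕ) :
    ω c = (m, n) ∨ c ≤ (ω c).1 + (ω c).2 := by
  induction c with
  | zero => simp
  | succ c ih =>
    by_cases hd : m ≤ (ω c).1 ∧ n ≤ (ω c).2
    · left
      rw [walk_succ_of_done hd]
      have := walk_le (A := A) (B := B) (m := m) (n := n) c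
      exact Prod.ext (by omega) (by omega)
    · rcases ih with he | ih
      · rw [he] at hd; simp at hd
      right
      rw [walk_succ_of_not_done hd]
      cases nextStep A B m n (ω c).1 (ω c).2 <;>
        simp only [Step.advance] <;> omega

lemma walk_add : ω (m + n) = (m, n) := by
  have := walk_le (A := A) (B := B) (m := m) (n := n) (m + n)
  rcases walk_eq_end_or_le (A := A) (B := B) (m := m) (n := n) (m + n) with h | h
  · exact h
  · exact Prod.ext (by omega) (by omega)

variable {j l : ℕ}

lemma exists_lt_walk_fst (hj : j < m) : ∃ c, j < (ω c).1 :=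
  ⟨m + n, by rw [walk_add]; exact hj⟩

lemma exists_lt_walk_snd (hl : l < n) : ∃ c, l < (ω c).2 :=
  ⟨m + n, by rw [walk_add]; exact hl⟩

lemma walk_walkColA (hj : j < m) :
    (ω (walkColA A B m n j)).1 = j ∧ (ω (walkColA A B m n j + 1)).1 = j + 1 :=
  crossing_spec rfl (fun c => (walk_succ_le c).2.1) (exists_lt_walk_fst hj)

lemma walk_walkColB (hl : l < n) :
    (ω (walkColB A B m n l)).2 = l ∧ (ω (walkColB A B m n l + 1)).2 = l + 1 :=
  crossing_spec rfl (fun c => (walk_succ_le c).2.2.2) (exists_lt_walk_snd hl)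

lemma walkColA_walk (h : (ω (c + 1)).1 = (ω c).1 + 1) :
    (ω c).1 < m ∧ walkColA A B m n (ω c).1 = c :=
  ⟨by have := (walk_le (A := A) (B := B) (m := m) (n := n) (c + 1)).1; omega,
    crossing_of_succ monotone_walk_fst h⟩

lemma walkColB_walk (h : (ω (c + 1)).2 = (ω c).2 + 1) :
    (ω c).2 < n ∧ walkColB A B m n (ω c).2 = c :=
  ⟨by have := (walk_le (A := A) (B := B) (m := m) (n := n) (c + 1)).2; omega,
    crossing_of_succ monotone_walk_snd h⟩

lemma strictMonoOn_walkColA : StrictMonoOn (walkColA A B m n) (Set.Iio m) := fun _ _ _ hj' hjj =>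
  crossing_lt_crossing monotone_walk_fst rfl (fun c => (walk_succ_le c).2.1) hjj
    (exists_lt_walk_fst hj')

lemma strictMonoOn_walkColB : StrictMonoOn (walkColB A B m n) (Set.Iio n) := fun _ _ _ hl' hll =>
  crossing_lt_crossing monotone_walk_snd rfl (fun c => (walk_succ_le c).2.2.2) hll
    (exists_lt_walk_snd hl')

end Walk

section NextStepOrder

variable {P : Type*} [PartialOrder P] {A B : ℕ → P} {m n l : ℕ}

lemma nextStep_succ_ne_top {k : ℕ} (hs : nextStep A B m n k l = .bot) (hk : k < m)
    (hlt : ¬ B l < A k) : l + 1 < n ∧ nextStep A B m n k (l + 1) ≠ .top := by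
  rcases of_nextStep_eq_bot hs hk with h | ⟨-, hblocked, hbot, hnlt⟩
  · exact absurd h hlt
  rcases hblocked with ⟨htop, hk1, hlt1⟩ | ⟨hbot1, hnlt1⟩
  · exact absurd htop (nextStep_succ_ne_top hbot hk1 hlt1).2
  · have hl1 := lt_of_nextStep_eq_bot hbot1
    exact ⟨hl1, fun htop => (of_nextStep_eq_top htop hl1).2.2.2 ⟨hbot1, hnlt1⟩⟩
termination_by m - k

lemma lt_of_nextStep_advance_eq_bot {s : ℕ × ℕ} (hs : nextStep A B m n s.1 s.2 ≠ .bot)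
    (hs' : nextStep A B m n ((nextStep A B m n s.1 s.2).advance s).1
      ((nextStep A B m n s.1 s.2).advance s).2 = .bot) :
    A s.1 < B ((nextStep A B m n s.1 s.2).advance s).2 := by
  rcases h : nextStep A B m n s.1 s.2 <;> rw [h] at hs' <;> simp only [Step.advance] at hs' ⊢
  · by_contra hnlt
    exact (of_nextStep_eq_top h (lt_of_nextStep_eq_bot hs')).2.2.2 ⟨hs', hnlt⟩
  · exact absurd h hs
  · by_contra hnlt
    exact (of_nextStep_eq_both h).2.2.2 (Or.inr ⟨hs', hnlt⟩)

lemma lt_of_nextStep_advance_eq_top {s : ℕ × ℕ} (hs : nextStep A B m n s.1 s.2 ≠ .top)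
    (hs' : nextStep A B m n ((nextStep A B m n s.1 s.2).advance s).1
      ((nextStep A B m n s.1 s.2).advance s).2 = .top)
    (hk : ((nextStep A B m n s.1 s.2).advance s).1 < m) :
    B s.2 < A ((nextStep A B m n s.1 s.2).advance s).1 := by
  rcases h : nextStep A B m n s.1 s.2 <;> rw [h] at hs' hk <;>
    simp only [Step.advance] at hs' hk ⊢
  · exact absurd h hs
  · by_contra hnlt
    exact (nextStep_succ_ne_top h hk hnlt).2 hs'
  · by_contra hnlt
    exact (of_nextStep_eq_both h).2.2.2 (Or.inl ⟨hs', hk, hnlt⟩)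

end NextStepOrder

section WalkAlignment

variable {P : Type*} [PartialOrder P] {A B : ℕ → P} {m n c j l : ℕ}

local notation "ω" => walk A B m n
local notation "cA" => walkColA A B m n
local notation "cB" => walkColB A B m n

lemma walk_succ_ne_of_succ_succ_ne (h : ω (c + 2) ≠ ω (c + 1)) : ω (c + 1) ≠ ω c := by
  intro he
  apply h
  rw [walk_succ (c + 1), he, ← walk_succ, he]

lemma walk_fst_succ_or_snd_succ (h : ω (c + 1) ≠ ω c) :
    (ω (c + 1)).1 = (ω c).1 + 1 ∨ (ω (c + 1)).2 = (ω c).2 + 1 := by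
  have := walk_succ_le (A := A) (B := B) (m := m) (n := n) c
  by_contra! hne
  exact h (Prod.ext (by omega) (by omega))

lemma walk_fst_succ_of_ne_bot (h : ω (c + 1) ≠ ω c)
    (hs : nextStep A B m n (ω c).1 (ω c).2 ≠ .bot) : (ω (c + 1)).1 = (ω c).1 + 1 := by
  rw [walk_succ_eq_advance h]
  cases hs' : nextStep A B m n (ω c).1 (ω c).2
  · rfl
  · exact absurd hs' hs
  · rfl

lemma walk_snd_succ_of_ne_top (h : ω (c + 1) ≠ ω c)
    (hs : nextStep A B m n (ω c).1 (ω c).2 ≠ .top) : (ω (c + 1)).2 = (ω c).2 + 1 := by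
  rw [walk_succ_eq_advance h]
  cases hs' : nextStep A B m n (ω c).1 (ω c).2
  · exact absurd hs' hs
  · rfl
  · rfl

lemma nextStep_walk_ne_bot (h : (ω (c + 1)).1 = (ω c).1 + 1) :
    nextStep A B m n (ω c).1 (ω c).2 ≠ .bot := by
  intro hs
  have hne : ω (c + 1) ≠ ω c := fun he => by rw [he] at h; omega
  rw [walk_succ_eq_advance hne, hs] at h
  simp [Step.advance] at h

lemma nextStep_walk_ne_top (h : (ω (c + 1)).2 = (ω c).2 + 1) :
    nextStep A B m n (ω c).1 (ω c).2 ≠ .top := by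
  intro hs
  have hne : ω (c + 1) ≠ ω c := fun he => by rw [he] at h; omega
  rw [walk_succ_eq_advance hne, hs] at h
  simp [Step.advance] at h

lemma occupied_of_walk_succ_ne (h : ω (c + 1) ≠ ω c) : Occupied m n cA cB c := by
  rcases walk_fst_succ_or_snd_succ h with h' | h'
  · exact Or.inl ⟨_, walkColA_walk h'⟩
  · exact Or.inr ⟨_, walkColB_walk h'⟩

lemma walk_succ_ne_of_occupied (h : Occupied m n cA cB c) : ω (c + 1) ≠ ω c := by
  rcases h with ⟨j, hj, rfl⟩ | ⟨l, hl, rfl⟩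
  · have : (ω (cA j + 1)).1 = (ω (cA j)).1 + 1 := by
      rw [(walk_walkColA hj).1, (walk_walkColA hj).2]
    exact fun he => by rw [he] at this; omega
  · have : (ω (cB l + 1)).2 = (ω (cB l)).2 + 1 := by
      rw [(walk_walkColB hl).1, (walk_walkColB hl).2]
    exact fun he => by rw [he] at this; omega

lemma occupied_pred_walkCol (hc : 0 < c) (h : Occupied m n cA cB c) :
    Occupied m n cA cB (c - 1) := by
  obtain ⟨d, rfl⟩ : ∃ d, c = d + 1 := ⟨c - 1, by omega⟩
  exact occupied_of_walk_succ_ne (walk_succ_ne_of_succ_succ_ne (walk_succ_ne_of_occupied h))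

lemma walkColB_lt_walkColA_of_lt (hB : StrictMonoOn B (Set.Iio n)) (hl : l < n) (hj : j < m)
    (hlt : B l < A j) : cB l < cA j := by
  by_contra! hle
  have hc : (ω (cA j)).1 = j := (walk_walkColA hj).1
  have hc1 : (ω (cA j + 1)).1 = j + 1 := (walk_walkColA hj).2
  have hsnd : (ω (cA j)).2 ≤ l := by
    have hmono : (ω (cA j)).2 ≤ (ω (cB l)).2 := monotone_walk_snd hle
    have : (ω (cB l)).2 = l := (walk_walkColB hl).1
    omega
  have hstep : nextStep A B m n (ω (cA j)).1 (ω (cA j)).2 ≠ .bot :=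
    nextStep_walk_ne_bot (by omega)
  have hnlt := (of_nextStep_ne_bot hstep (by omega)).2
  rw [hc] at hnlt
  rcases hsnd.lt_or_eq with h | h
  · exact hnlt ((hB (Set.mem_Iio.2 (by omega)) hl h).trans hlt)
  · exact hnlt (h ▸ hlt)

lemma hasAbove_walkColA (hA : StrictMonoOn A (Set.Iio m)) (hj : j < m)
    (hocc : Occupied m n cA cB (cA j + 1)) : HasAbove A B m n cA cB (cA j + 1) (A j) := by
  have hc : (ω (cA j)).1 = j := (walk_walkColA hj).1
  have hc1 : (ω (cA j + 1)).1 = j + 1 := (walk_walkColA hj).2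
  have hmove := walk_succ_ne_of_occupied hocc
  by_cases hs : nextStep A B m n (ω (cA j + 1)).1 (ω (cA j + 1)).2 = .bot
  · obtain ⟨hl', hcol⟩ := walkColB_walk (walk_snd_succ_of_ne_top hmove (by rw [hs]; simp))
    refine Or.inr ⟨_, hl', hcol, ?_⟩
    have hprev : nextStep A B m n (ω (cA j)).1 (ω (cA j)).2 ≠ .bot :=
      nextStep_walk_ne_bot (by omega)
    have hadv := walk_succ_eq_advance (A := A) (B := B) (m := m) (n := n) (c := cA j)
      fun he => by rw [he] at hc1; omega
    rw [hadv] at hs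
    have := lt_of_nextStep_advance_eq_bot hprev hs
    rwa [← hadv, hc] at this
  · have hfst := walk_fst_succ_of_ne_bot hmove hs
    obtain ⟨hj', hcol⟩ := walkColA_walk hfst
    rw [hc1] at hj' hcol
    exact Or.inl ⟨j + 1, hj', hcol, hA (Set.mem_Iio.2 hj) hj' j.lt_succ_self⟩

lemma hasAbove_walkColB (hB : StrictMonoOn B (Set.Iio n)) (hl : l < n)
    (hocc : Occupied m n cA cB (cB l + 1)) : HasAbove A B m n cA cB (cB l + 1) (B l) := by
  have hc : (ω (cB l)).2 = l := (walk_walkColB hl).1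
  have hc1 : (ω (cB l + 1)).2 = l + 1 := (walk_walkColB hl).2
  have hmove := walk_succ_ne_of_occupied hocc
  by_cases hs : nextStep A B m n (ω (cB l + 1)).1 (ω (cB l + 1)).2 = .top
  · obtain ⟨hk', hcol⟩ := walkColA_walk (walk_fst_succ_of_ne_bot hmove (by rw [hs]; simp))
    refine Or.inl ⟨_, hk', hcol, ?_⟩
    have hprev : nextStep A B m n (ω (cB l)).1 (ω (cB l)).2 ≠ .top :=
      nextStep_walk_ne_top (by omega)
    have hadv := walk_succ_eq_advance (A := A) (B := B) (m := m) (n := n) (c := cB l)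
      fun he => by rw [he] at hc1; omega
    rw [hadv] at hs hk'
    have := lt_of_nextStep_advance_eq_top hprev hs hk'
    rwa [← hadv, hc] at this
  · have hsnd := walk_snd_succ_of_ne_top hmove hs
    obtain ⟨hl', hcol⟩ := walkColB_walk hsnd
    rw [hc1] at hl' hcol
    exact Or.inr ⟨l + 1, hl', hcol, hB (Set.mem_Iio.2 hl) hl' l.lt_succ_self⟩

variable (A B m n)

noncomputable def walkAlignment (hA : StrictMonoOn A (Set.Iio m))
    (hB : StrictMonoOn B (Set.Iio n)) : WeakAlignment A B m n where
  colA := cA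
  colB := cB
  strictMonoOn_colA := strictMonoOn_walkColA
  strictMonoOn_colB := strictMonoOn_walkColB
  occupied_pred _ := occupied_pred_walkCol
  colB_lt_colA _ hl _ hj := walkColB_lt_walkColA_of_lt hB hl hj
  hasAbove_colA _ hj := hasAbove_walkColA hA hj
  hasAbove_colB _ hl := hasAbove_walkColB hB hl

end WalkAlignment

section Minimality

variable {P : Type*} [PartialOrder P] {A B : ℕ → P} {m n : ℕ}

lemma nextStep_eq_bot_of_lt {k l : ℕ} (hl : l < n) (h : B l < A k) :
    nextStep A B m n k l = .bot := by
  by_contra hs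
  exact (of_nextStep_ne_bot hs hl).2 h

lemma Blocked.top_of_lt {k l : ℕ} (hB : StrictMonoOn B (Set.Iio n)) (hb : Blocked A B m n k l)
    (h : A k < B l) :
    nextStep A B m n (k + 1) (l + 1) = .top ∧ k + 1 < m ∧ ¬ B l < A (k + 1) := by
  rcases hb with hb | ⟨hbot, hnlt⟩
  · exact hb
  · have hl1 := lt_of_nextStep_eq_bot hbot
    exact absurd (h.trans (hB (Set.mem_Iio.2 (by omega)) hl1 l.lt_succ_self)) hnlt

lemma nextStep_ne_both {k l : ℕ} (hB : StrictMonoOn B (Set.Iio n)) (hk : k < m)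
    (hbot : nextStep A B m n k (l + 1) = .bot) : nextStep A B m n k l ≠ .both := by
  intro hboth
  obtain ⟨hl, -, hnlt, hnblocked⟩ := of_nextStep_eq_both hboth
  rcases of_nextStep_eq_bot hbot hk with h | ⟨-, -, hbot1, hnlt1⟩
  · have hl1 := lt_of_nextStep_eq_bot hbot
    exact hnlt ((hB (Set.mem_Iio.2 hl) (Set.mem_Iio.2 hl1) l.lt_succ_self).trans h)
  · exact hnblocked (Or.inr ⟨hbot1, hnlt1⟩)

variable (hA : StrictMonoOn A (Set.Iio m)) (hB : StrictMonoOn B (Set.Iio n))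
  (W : WeakAlignment A B m n)

def WeakAlignment.RespectsStep (k l : ℕ) : Prop :=
  (nextStep A B m n k l = .top → W.colA k < W.colB l) ∧
  (nextStep A B m n k l = .bot → W.colB l < W.colA k)

include hA hB in
lemma WeakAlignment.colA_lt_colB_of_nextStep_eq_top {k l : ℕ} (hl : l < n)
    (hs : nextStep A B m n k l = .top)
    (ih : ∀ l', k + 1 < m → l' < n → W.RespectsStep (k + 1) l') : W.colA k < W.colB l := by
  obtain ⟨hk, hnlt, hblocked, hguard⟩ := of_nextStep_eq_top hs hl
  have hlt_of_bot : nextStep A B m n (k + 1) l = .bot → A k < B l := fun hbot => by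
    by_contra h
    exact hguard ⟨hbot, h⟩
  by_contra! hle
  have hk1 : k + 1 < m := by
    by_cases hbot : nextStep A B m n (k + 1) l = .bot
    · exact (hblocked.top_of_lt hB (hlt_of_bot hbot)).2.1
    · exact (of_nextStep_ne_bot hbot hl).1
  have hAk := W.strictMonoOn_colA (Set.mem_Iio.2 hk) (Set.mem_Iio.2 hk1) k.lt_succ_self
  rcases W.hasAbove_colB l hl (W.occupied_of_le_colA hk1 (by omega)) with
    ⟨j, hj, hcol, hlt⟩ | ⟨l', hl', hcol, hlt⟩
  · have hkj : k < j := by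
      by_contra! hjk
      exact hnlt (hlt.trans_le ((hA.le_iff_le (Set.mem_Iio.2 hj) (Set.mem_Iio.2 hk)).2 hjk))
    obtain rfl := W.eq_succ_of_colA_le hkj hj (by omega)
    exact (hblocked.top_of_lt hB (hlt_of_bot (nextStep_eq_bot_of_lt hl hlt))).2.2 hlt
  · have hll : l < l' := (hB.lt_iff_lt (Set.mem_Iio.2 hl) (Set.mem_Iio.2 hl')).1 hlt
    obtain rfl := W.eq_succ_of_colB_le hll hl' (by omega)
    rcases hblocked with ⟨htop1, -, -⟩ | ⟨hbot1, hnlt1⟩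
    · have := (ih (l + 1) hk1 hl').1 htop1
      omega
    rcases hs' : nextStep A B m n (k + 1) l
    · have := (ih l hk1 hl).1 hs'
      omega
    · exact hnlt1 ((hlt_of_bot hs').trans hlt)
    · exact nextStep_ne_both hB hk1 hbot1 hs'

include hA hB in
lemma WeakAlignment.colB_lt_colA_of_nextStep_eq_bot {k l : ℕ} (hk : k < m) (hl : l < n)
    (hs : nextStep A B m n k l = .bot)
    (ih : ∀ l', k + 1 < m → l' < n → W.RespectsStep (k + 1) l') : W.colB l < W.colA k := by
  rcases of_nextStep_eq_bot hs hk with hlt | ⟨hnlt, hblocked, hbot, hnlt'⟩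
  · exact W.colB_lt_colA l hl k hk hlt
  by_contra! hle
  rcases hblocked with ⟨htop1, hk1, hnlt1⟩ | ⟨hbot1, hnlt1⟩
  · -- `B l` lies left of `A (k + 1)`, and the entry right after `B l` must be `A (k + 1)`
    have hlk1 := (ih l hk1 hl).2 hbot
    rcases W.hasAbove_colB l hl (W.occupied_of_le_colA hk1 hlk1) with
      ⟨j, hj, hcol, hlt⟩ | ⟨l', hl', hcol, hlt⟩
    · have hkj : k < j := (W.strictMonoOn_colA.lt_iff_lt hk hj).1 (by omega)
      have hjk : j ≤ k + 1 := (W.strictMonoOn_colA.le_iff_le hj hk1).1 (by omega)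
      obtain rfl : j = k + 1 := by omega
      exact hnlt1 hlt
    · have hll : l < l' := (hB.lt_iff_lt (Set.mem_Iio.2 hl) (Set.mem_Iio.2 hl')).1 hlt
      obtain rfl := W.eq_succ_of_colB_le hll hl' (by omega)
      have := (ih (l + 1) hk1 hl').1 htop1
      omega
  · -- `A k` lies left of `B (l + 1)`, and the entry right after `A k` must be `B (l + 1)`
    have hl1 := lt_of_nextStep_eq_bot hbot1
    have hBl := W.strictMonoOn_colB (Set.mem_Iio.2 hl) (Set.mem_Iio.2 hl1) l.lt_succ_self
    rcases W.hasAbove_colA k hk (W.occupied_of_le_colB hl1 (by omega)) with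
      ⟨j, hj, hcol, hlt⟩ | ⟨l', hl', hcol, hlt⟩
    · have hkj : k < j := (hA.lt_iff_lt (Set.mem_Iio.2 hk) (Set.mem_Iio.2 hj)).1 hlt
      have hk1 : k + 1 < m := by omega
      have := (ih (l + 1) hk1 hl1).2 hbot1
      have := (W.strictMonoOn_colA.le_iff_le hk1 hj).2 hkj
      omega
    · have hll : l < l' := by
        by_contra! hll
        exact hnlt' (hlt.trans_le ((hB.le_iff_le (Set.mem_Iio.2 hl') (Set.mem_Iio.2 hl)).2 hll))
      obtain rfl := W.eq_succ_of_colB_le hll hl' (by omega)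
      exact hnlt1 hlt

include hA hB in
lemma WeakAlignment.respectsStep {k l : ℕ} (hk : k < m) (hl : l < n) : W.RespectsStep k l :=
  have ih : ∀ l', k + 1 < m → l' < n → W.RespectsStep (k + 1) l' :=
    fun _ hk1 hl' => WeakAlignment.respectsStep hk1 hl'
  ⟨fun hs => W.colA_lt_colB_of_nextStep_eq_top hA hB hl hs ih,
    fun hs => W.colB_lt_colA_of_nextStep_eq_bot hA hB hk hl hs ih⟩
termination_by m - k

local notation "ω" => walk A B m n

include hA hB in
lemma WeakAlignment.le_col_walk (c : ℕ) :
    ((ω c).1 < m → c ≤ W.colA (ω c).1) ∧ ((ω c).2 < n → c ≤ W.colB (ω c).2) := by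
  induction c with
  | zero => simp
  | succ c ih =>
    by_cases hdone : m ≤ (ω c).1 ∧ n ≤ (ω c).2
    · rw [walk_succ_of_done hdone]
      exact ⟨fun h => absurd h (by omega), fun h => absurd h (by omega)⟩
    have hA' {k} (hk : k + 1 < m) : W.colA k < W.colA (k + 1) :=
      W.strictMonoOn_colA (Set.mem_Iio.2 (by omega)) (Set.mem_Iio.2 hk) k.lt_succ_self
    have hB' {l} (hl : l + 1 < n) : W.colB l < W.colB (l + 1) :=
      W.strictMonoOn_colB (Set.mem_Iio.2 (by omega)) (Set.mem_Iio.2 hl) l.lt_succ_self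
    rw [walk_succ_of_not_done hdone]
    rcases hs : nextStep A B m n (ω c).1 (ω c).2 <;> simp only [Step.advance]
    · refine ⟨fun hk1 => ?_, fun hl => ?_⟩
      · have := ih.1 (by omega); have := hA' hk1; omega
      · have hk := (of_nextStep_eq_top hs hl).1
        have := ih.1 hk; have := (W.respectsStep hA hB hk hl).1 hs; omega
    · have hl := lt_of_nextStep_eq_bot hs
      refine ⟨fun hk => ?_, fun hl1 => ?_⟩
      · have := ih.2 hl; have := (W.respectsStep hA hB hk hl).2 hs; omega
      · have := ih.2 hl; have := hB' hl1; omega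
    · obtain ⟨hl, hk, -⟩ := of_nextStep_eq_both hs
      refine ⟨fun hk1 => ?_, fun hl1 => ?_⟩
      · have := ih.1 hk; have := hA' hk1; omega
      · have := ih.2 hl; have := hB' hl1; omega

include hA hB in
lemma WeakAlignment.walkColA_le {j : ℕ} (hj : j < m) : walkColA A B m n j ≤ W.colA j := by
  have := (W.le_col_walk hA hB (walkColA A B m n j)).1
  rw [(walk_walkColA hj).1] at this
  exact this hj

include hA hB in
lemma WeakAlignment.walkColB_le {l : ℕ} (hl : l < n) : walkColB A B m n l ≤ W.colB l := by
  have := (W.le_col_walk hA hB (walkColB A B m n l)).2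
  rw [(walk_walkColB hl).1] at this
  exact this hl

end Minimality

section Tableau

variable {P : Type*} [PartialOrder P] {A B : ℕ → P} {m n : ℕ}

variable (A B m n) in
/-- `B l, B (l + 1), …` placed below `A k, A (k + 1), …` form a two-row tableau. -/
def ShiftedTableau (k l : ℕ) : Prop :=
  ∀ i, l + i < n → k + i < m ∧ ¬ B (l + i) < A (k + i)

lemma ShiftedTableau.succ {k l : ℕ} (h : ShiftedTableau A B m n k l) :
    ShiftedTableau A B m n (k + 1) (l + 1) := fun i hi => by
  rw [Nat.add_right_comm k, Nat.add_right_comm l]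
  exact h (i + 1) (by omega)

lemma ShiftedTableau.nextStep_ne_bot {k l : ℕ} (h : ShiftedTableau A B m n k l) (hl : l < n) :
    nextStep A B m n k l ≠ .bot := by
  intro hs
  obtain ⟨hk, hnlt⟩ := h 0 (by omega)
  rcases of_nextStep_eq_bot hs hk with hlt | ⟨-, hblocked, hbot, -⟩
  · exact hnlt hlt
  rcases hblocked with ⟨htop1, hk1, hnlt1⟩ | ⟨hbot1, -⟩
  · exact (nextStep_succ_ne_top hbot hk1 hnlt1).2 htop1
  · exact h.succ.nextStep_ne_bot (lt_of_nextStep_eq_bot hbot1) hbot1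
termination_by n - l

lemma ShiftedTableau.of_nextStep_eq_top {k l : ℕ} (h : ShiftedTableau A B m n k l) (hl : l < n)
    (hs : nextStep A B m n k l = .top) : ShiftedTableau A B m n (k + 1) l := by
  obtain ⟨-, -, hblocked, -⟩ := RowAlignment.of_nextStep_eq_top hs hl
  rcases hblocked with ⟨htop1, hk1, hnlt1⟩ | ⟨hbot1, -⟩
  · rintro (_ | i) hi
    · exact ⟨hk1, hnlt1⟩
    · rw [show k + 1 + (i + 1) = k + 1 + 1 + i by omega, show l + (i + 1) = l + 1 + i by omega]
      exact (h.succ.of_nextStep_eq_top (by omega) htop1) i (by omega)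
  · exact absurd hbot1 (h.succ.nextStep_ne_bot (lt_of_nextStep_eq_bot hbot1))
termination_by n - l

local notation "ω" => walk A B m n

lemma ShiftedTableau.walk (h : ShiftedTableau A B m n 0 0) (c : ℕ) :
    ShiftedTableau A B m n (ω c).1 (ω c).2 := by
  induction c with
  | zero => exact h
  | succ c ih =>
    by_cases hdone : m ≤ (ω c).1 ∧ n ≤ (ω c).2
    · rwa [walk_succ_of_done hdone]
    rw [walk_succ_of_not_done hdone]
    rcases hs : nextStep A B m n (ω c).1 (ω c).2 <;> simp only [Step.advance]
    · by_cases hl : (ω c).2 < n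
      · exact ih.of_nextStep_eq_top hl hs
      · exact fun i hi => absurd hi (by omega)
    · exact absurd hs (ih.nextStep_ne_bot (lt_of_nextStep_eq_bot hs))
    · exact ih.succ

lemma ShiftedTableau.covers (h : ShiftedTableau A B m n 0 0) {l : ℕ} (hl : l < n) :
    ∃ j < m, walkColA A B m n j = walkColB A B m n l := by
  obtain ⟨hc, hc1⟩ := walk_walkColB (A := A) (m := m) hl
  have hmove : ω (walkColB A B m n l + 1) ≠ ω (walkColB A B m n l) :=
    fun he => by rw [he] at hc1; omega
  have hbot := (h.walk (walkColB A B m n l)).nextStep_ne_bot (by omega)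
  exact ⟨_, walkColA_walk (walk_fst_succ_of_ne_bot hmove hbot)⟩

lemma WeakAlignment.shiftedTableau_of_covers (hA : StrictMonoOn A (Set.Iio m))
    (W : WeakAlignment A B m n) (hcov : ∀ l < n, ∃ j < m, W.colA j = W.colB l) :
    ShiftedTableau A B m n 0 0 := by
  have hle : ∀ l < n, ∀ j < m, W.colA j = W.colB l → l ≤ j := by
    intro l
    induction l with
    | zero => simp
    | succ l ih =>
      intro hl j hj hcol
      obtain ⟨j', hj', hcol'⟩ := hcov l (by omega)
      have hlt := W.strictMonoOn_colB (Set.mem_Iio.2 (by omega)) (Set.mem_Iio.2 hl) l.lt_succ_self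
      rw [← hcol, ← hcol', W.strictMonoOn_colA.lt_iff_lt (Set.mem_Iio.2 hj') (Set.mem_Iio.2 hj)]
        at hlt
      have := ih (by omega) j' hj' hcol'
      omega
  intro i hi
  obtain ⟨j, hj, hcol⟩ := hcov i (by omega)
  have hij := hle i (by omega) j hj hcol
  simp only [Nat.zero_add] at hi ⊢
  refine ⟨by omega, fun hlt => ?_⟩
  have hAij := (hA.le_iff_le (Set.mem_Iio.2 (by omega)) (Set.mem_Iio.2 hj)).2 hij
  have := W.colB_lt_colA i hi j hj (hlt.trans_le hAij)
  omega

end Tableau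

end RowAlignment

namespace PArray

section Rows

variable {P : Type*} [PartialOrder P] (T : PArray P) {r j : ℕ} {x : P}

lemma exists_entry_eq_none [Finite P] (r : ℕ) : ∃ j, T.entry r j = none := by
  by_contra! h
  choose f hf using fun j => Option.ne_none_iff_exists'.1 (h j)
  refine not_injective_infinite_finite f fun j j' he => ?_
  have := (T.exists_unique (f j')).unique (y₁ := (r, j)) (y₂ := (r, j')) (he ▸ hf j) (hf j')
  exact congrArg Prod.snd this

noncomputable def row [Inhabited P] (r j : ℕ) : P := (T.entry r j).getD default

lemma row_eq_of_entry_eq_some [Inhabited P] (h : T.entry r j = some x) : T.row r j = x := by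
  simp [row, h]

variable [Finite P]

open Classical in
noncomputable def rowLen (r : ℕ) : ℕ := Nat.find (T.exists_entry_eq_none r)

lemma entry_eq_none_of_rowLen_le (h : T.rowLen r ≤ j) : T.entry r j = none := by
  classical
  induction j, h using Nat.le_induction with
  | base => exact Nat.find_spec (T.exists_entry_eq_none r)
  | succ j _ ih =>
    by_contra hne
    obtain ⟨x, hx⟩ := Option.ne_none_iff_exists'.1 hne
    obtain ⟨y, hy, -⟩ := T.row_chain r j x hx
    rw [ih] at hy
    cases hy

lemma lt_rowLen_of_entry_eq_some (h : T.entry r j = some x) : j < T.rowLen r := by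
  by_contra! hle
  rw [T.entry_eq_none_of_rowLen_le hle] at h
  cases h

variable [Inhabited P]

lemma entry_eq_some_row (hj : j < T.rowLen r) : T.entry r j = some (T.row r j) := by
  classical
  obtain ⟨x, hx⟩ := Option.ne_none_iff_exists'.1 (Nat.find_min (T.exists_entry_eq_none r) hj)
  simp [row, hx]

lemma strictMonoOn_row (r : ℕ) : StrictMonoOn (T.row r) (Set.Iio (T.rowLen r)) := by
  refine strictMonoOn_of_lt_succ Set.ordConnected_Iio fun j _ _ hj1 => ?_
  rw [Order.succ_eq_add_one] at hj1 ⊢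
  obtain ⟨y, hy, hlt⟩ := T.row_chain r j _ (T.entry_eq_some_row hj1)
  rwa [T.row_eq_of_entry_eq_some hy]

lemma inRow_iff : InRow T r x ↔ ∃ j < T.rowLen r, T.row r j = x :=
  ⟨fun ⟨j, hj⟩ => ⟨j, T.lt_rowLen_of_entry_eq_some hj, T.row_eq_of_entry_eq_some hj⟩,
    fun ⟨j, hj, hx⟩ => ⟨j, hx ▸ T.entry_eq_some_row hj⟩⟩

lemma row_ne_row_succ {l : ℕ} (hj : j < T.rowLen r) (hl : l < T.rowLen (r + 1)) :
    T.row r j ≠ T.row (r + 1) l := by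
  intro h
  have := (T.exists_unique (T.row (r + 1) l)).unique (y₁ := (r, j)) (y₂ := (r + 1, l))
    (h ▸ T.entry_eq_some_row hj) (T.entry_eq_some_row hl)
  simp at this

end Rows

open RowAlignment

section Alignment

variable {P : Type*} [PartialOrder P] [Finite P] [Inhabited P] (T : PArray P) (r : ℕ)
  {γ : P → ℕ} {colA colB : ℕ → ℕ}

lemma exists_inRow_iff_occupied (hA : ∀ j < T.rowLen r, γ (T.row r j) = colA j)
    (hB : ∀ l < T.rowLen (r + 1), γ (T.row (r + 1) l) = colB l) {c : ℕ} :
    (∃ x, (InRow T r x ∨ InRow T (r + 1) x) ∧ γ x = c) ↔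
      Occupied (T.rowLen r) (T.rowLen (r + 1)) colA colB c := by
  simp only [inRow_iff, Occupied]
  constructor
  · rintro ⟨x, ⟨j, hj, rfl⟩ | ⟨l, hl, rfl⟩, rfl⟩
    exacts [Or.inl ⟨j, hj, (hA j hj).symm⟩, Or.inr ⟨l, hl, (hB l hl).symm⟩]
  · rintro (⟨j, hj, rfl⟩ | ⟨l, hl, rfl⟩)
    exacts [⟨_, Or.inl ⟨j, hj, rfl⟩, hA j hj⟩, ⟨_, Or.inr ⟨l, hl, rfl⟩, hB l hl⟩]

lemma exists_inRow_iff_hasAbove (hA : ∀ j < T.rowLen r, γ (T.row r j) = colA j)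
    (hB : ∀ l < T.rowLen (r + 1), γ (T.row (r + 1) l) = colB l) {c : ℕ} {x : P} :
    (∃ y, (InRow T r y ∨ InRow T (r + 1) y) ∧ γ y = c ∧ x < y) ↔
      HasAbove (T.row r) (T.row (r + 1)) (T.rowLen r) (T.rowLen (r + 1)) colA colB c x := by
  simp only [inRow_iff, HasAbove]
  constructor
  · rintro ⟨y, ⟨j, hj, rfl⟩ | ⟨l, hl, rfl⟩, rfl, hlt⟩
    exacts [Or.inl ⟨j, hj, (hA j hj).symm, hlt⟩, Or.inr ⟨l, hl, (hB l hl).symm, hlt⟩]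
  · rintro (⟨j, hj, rfl, hlt⟩ | ⟨l, hl, rfl, hlt⟩)
    exacts [⟨_, Or.inl ⟨j, hj, rfl⟩, hA j hj, hlt⟩,
      ⟨_, Or.inr ⟨l, hl, rfl⟩, hB l hl, hlt⟩]

lemma inRow_row {j : ℕ} (hj : j < T.rowLen r) : InRow T r (T.row r j) :=
  (T.inRow_iff).2 ⟨j, hj, rfl⟩

noncomputable def weakAlignmentOfRow (h : WeakAlignRow T r γ) :
    WeakAlignment (T.row r) (T.row (r + 1)) (T.rowLen r) (T.rowLen (r + 1)) where
  colA j := γ (T.row r j)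
  colB l := γ (T.row (r + 1) l)
  strictMonoOn_colA _ hj _ hj' hjj :=
    h.1 _ _ (T.inRow_row r hj) (T.inRow_row r hj') (T.strictMonoOn_row r hj hj' hjj)
  strictMonoOn_colB _ hl _ hl' hll :=
    h.2.1 _ _ (T.inRow_row _ hl) (T.inRow_row _ hl') (T.strictMonoOn_row _ hl hl' hll)
  occupied_pred c hc hocc :=
    (T.exists_inRow_iff_occupied r (fun _ _ => rfl) (fun _ _ => rfl)).1
      (h.2.2.1 c hc ((T.exists_inRow_iff_occupied r (fun _ _ => rfl) (fun _ _ => rfl)).2 hocc))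
  colB_lt_colA _ hl _ hj hlt := h.2.2.2.1 _ _ (T.inRow_row _ hl) (T.inRow_row r hj) hlt
  hasAbove_colA _ hj hocc :=
    (T.exists_inRow_iff_hasAbove r (fun _ _ => rfl) (fun _ _ => rfl)).1
      (h.2.2.2.2 _ (Or.inl (T.inRow_row r hj))
        ((T.exists_inRow_iff_occupied r (fun _ _ => rfl) (fun _ _ => rfl)).2 hocc))
  hasAbove_colB _ hl hocc :=
    (T.exists_inRow_iff_hasAbove r (fun _ _ => rfl) (fun _ _ => rfl)).1
      (h.2.2.2.2 _ (Or.inr (T.inRow_row _ hl))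
        ((T.exists_inRow_iff_occupied r (fun _ _ => rfl) (fun _ _ => rfl)).2 hocc))

open Classical in
noncomputable def rowCol (colA colB : ℕ → ℕ) (x : P) : ℕ :=
  if h : ∃ j < T.rowLen r, T.row r j = x then colA h.choose
  else if h' : ∃ l < T.rowLen (r + 1), T.row (r + 1) l = x then colB h'.choose else 0

lemma rowCol_row {j : ℕ} (hj : j < T.rowLen r) : T.rowCol r colA colB (T.row r j) = colA j := by
  have h : ∃ j' < T.rowLen r, T.row r j' = T.row r j := ⟨j, hj, rfl⟩
  rw [rowCol, dif_pos h, (T.strictMonoOn_row r).injOn h.choose_spec.1 hj h.choose_spec.2]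

lemma rowCol_row_succ {l : ℕ} (hl : l < T.rowLen (r + 1)) :
    T.rowCol r colA colB (T.row (r + 1) l) = colB l := by
  have h : ¬ ∃ j < T.rowLen r, T.row r j = T.row (r + 1) l :=
    fun ⟨j, hj, he⟩ => T.row_ne_row_succ hj hl he
  have h' : ∃ l' < T.rowLen (r + 1), T.row (r + 1) l' = T.row (r + 1) l := ⟨l, hl, rfl⟩
  rw [rowCol, dif_neg h, dif_pos h',
    (T.strictMonoOn_row _).injOn h'.choose_spec.1 hl h'.choose_spec.2]

lemma weakAlignRow_rowCol
    (W : WeakAlignment (T.row r) (T.row (r + 1)) (T.rowLen r) (T.rowLen (r + 1))) :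
    WeakAlignRow T r (T.rowCol r W.colA W.colB) := by
  have hA : ∀ j < T.rowLen r, T.rowCol r W.colA W.colB (T.row r j) = W.colA j :=
    fun _ => T.rowCol_row r
  have hB : ∀ l < T.rowLen (r + 1), T.rowCol r W.colA W.colB (T.row (r + 1) l) = W.colB l :=
    fun _ => T.rowCol_row_succ r
  refine ⟨?_, ?_, fun c hc hocc => ?_, ?_, fun x hx hocc => ?_⟩
  · rintro _ _ hx hy hlt
    obtain ⟨j, hj, rfl⟩ := (T.inRow_iff).1 hx
    obtain ⟨j', hj', rfl⟩ := (T.inRow_iff).1 hy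
    rw [hA j hj, hA j' hj']
    exact W.strictMonoOn_colA hj hj' (((T.strictMonoOn_row r).lt_iff_lt hj hj').1 hlt)
  · rintro _ _ hx hy hlt
    obtain ⟨l, hl, rfl⟩ := (T.inRow_iff).1 hx
    obtain ⟨l', hl', rfl⟩ := (T.inRow_iff).1 hy
    rw [hB l hl, hB l' hl']
    exact W.strictMonoOn_colB hl hl' (((T.strictMonoOn_row _).lt_iff_lt hl hl').1 hlt)
  · rw [T.exists_inRow_iff_occupied r hA hB] at hocc ⊢
    exact W.occupied_pred c hc hocc
  · rintro _ _ hx hy hlt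
    obtain ⟨l, hl, rfl⟩ := (T.inRow_iff).1 hx
    obtain ⟨j, hj, rfl⟩ := (T.inRow_iff).1 hy
    rw [hB l hl, hA j hj]
    exact W.colB_lt_colA l hl j hj hlt
  · rw [T.exists_inRow_iff_occupied r hA hB] at hocc
    rw [T.exists_inRow_iff_hasAbove r hA hB]
    rcases hx with hx | hx
    · obtain ⟨j, hj, rfl⟩ := (T.inRow_iff).1 hx
      rw [hA j hj] at hocc ⊢
      exact W.hasAbove_colA j hj hocc
    · obtain ⟨l, hl, rfl⟩ := (T.inRow_iff).1 hx
      rw [hB l hl] at hocc ⊢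
      exact W.hasAbove_colB l hl hocc

/-- The `r` alignment of `T`: the greedy alignment of rows `r` and `r + 1`. -/
noncomputable def minCol : P → ℕ :=
  let W := walkAlignment _ _ _ _ (T.strictMonoOn_row r) (T.strictMonoOn_row (r + 1))
  T.rowCol r W.colA W.colB

lemma weakAlignRow_minCol : WeakAlignRow T r (T.minCol r) :=
  T.weakAlignRow_rowCol r _

lemma minCol_le (h : WeakAlignRow T r γ) (x : P) (hx : InRow T r x ∨ InRow T (r + 1) x) :
    T.minCol r x ≤ γ x := by
  have hA := T.strictMonoOn_row r
  have hB := T.strictMonoOn_row (r + 1)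
  rcases hx with hx | hx
  · obtain ⟨j, hj, rfl⟩ := (T.inRow_iff).1 hx
    rw [minCol, rowCol_row _ _ hj]
    exact (T.weakAlignmentOfRow r h).walkColA_le hA hB hj
  · obtain ⟨l, hl, rfl⟩ := (T.inRow_iff).1 hx
    rw [minCol, rowCol_row_succ _ _ hl]
    exact (T.weakAlignmentOfRow r h).walkColB_le hA hB hl

lemma covers_rowCol_iff :
    (∀ x, InRow T (r + 1) x →
      ∃ y, InRow T r y ∧ T.rowCol r colA colB y = T.rowCol r colA colB x) ↔
      ∀ l < T.rowLen (r + 1), ∃ j < T.rowLen r, colA j = colB l := by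
  simp only [inRow_iff]
  constructor
  · intro h l hl
    obtain ⟨_, ⟨j, hj, rfl⟩, he⟩ := h _ ⟨l, hl, rfl⟩
    rw [T.rowCol_row r hj, T.rowCol_row_succ r hl] at he
    exact ⟨j, hj, he⟩
  · rintro h _ ⟨l, hl, rfl⟩
    obtain ⟨j, hj, he⟩ := h l hl
    exact ⟨_, ⟨j, hj, rfl⟩, by rw [T.rowCol_row r hj, T.rowCol_row_succ r hl, he]⟩

lemma shiftedTableau_iff :
    ShiftedTableau (T.row r) (T.row (r + 1)) (T.rowLen r) (T.rowLen (r + 1)) 0 0 ↔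
      ∀ j x, T.entry (r + 1) j = some x → ∃ y, T.entry r j = some y ∧ ¬ x < y := by
  simp only [ShiftedTableau, Nat.zero_add]
  constructor
  · intro h j x hx
    obtain ⟨hj, hnlt⟩ := h j (T.lt_rowLen_of_entry_eq_some hx)
    exact ⟨_, T.entry_eq_some_row hj, T.row_eq_of_entry_eq_some hx ▸ hnlt⟩
  · intro h j hj
    obtain ⟨y, hy, hnlt⟩ := h j _ (T.entry_eq_some_row hj)
    exact ⟨T.lt_rowLen_of_entry_eq_some hy, T.row_eq_of_entry_eq_some hy ▸ hnlt⟩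

lemma covers_minCol_iff :
    (∀ x, InRow T (r + 1) x → ∃ y, InRow T r y ∧ T.minCol r y = T.minCol r x) ↔
      ∀ j x, T.entry (r + 1) j = some x → ∃ y, T.entry r j = some y ∧ ¬ x < y := by
  rw [minCol, covers_rowCol_iff, ← shiftedTableau_iff]
  exact ⟨WeakAlignment.shiftedTableau_of_covers (T.strictMonoOn_row r) _,
    fun h _ hl => h.covers hl⟩

end Alignment

end PArray

theorem stmt_14_general {P : Type*} [PartialOrder P] [Fintype P] (T : PArray P) :
    (∀ (r : ℕ) (γ : P → ℕ), WeakAlignRow T r γ →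
      (∀ γ', WeakAlignRow T r γ' → ∀ x, (InRow T r x ∨ InRow T (r + 1) x) → γ x ≤ γ' x) →
      ∀ x, InRow T (r + 1) x → ∃ y, InRow T r y ∧ γ y = γ x) ↔
    (∀ i j x, T.entry (i + 1) j = some x → ∃ y, T.entry i j = some y ∧ ¬ x < y) := by
  cases isEmpty_or_nonempty P
  · exact ⟨fun _ _ _ x _ => isEmptyElim x, fun _ _ _ _ _ x _ => isEmptyElim x⟩
  inhabit P
  refine ⟨fun h i => (T.covers_minCol_iff i).1
    (h i _ (T.weakAlignRow_minCol i) fun _ hγ' => T.minCol_le i hγ'), fun h r γ hγ hmin => ?_⟩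
  have heq : ∀ x, (InRow T r x ∨ InRow T (r + 1) x) → γ x = T.minCol r x := fun x hx =>
    le_antisymm (hmin _ (T.weakAlignRow_minCol r) x hx) (T.minCol_le r hγ x hx)
  intro x hx
  obtain ⟨y, hy, hxy⟩ := (T.covers_minCol_iff r).2 (h r) x hx
  exact ⟨y, hy, by rw [heq y (Or.inl hy), heq x (Or.inr hx), hxy]⟩

/-- A `P`-array is a highest weight element of the `P`-array crystal (for every `r`,
in the `r` alignment — the minimal weak `r` alignment — every column containing an
entry of row `r+1` also contains an entry of row `r`, i.e. `e_r(T) = 0`) if and only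
if it is a `P`-tableau. -/
theorem stmt_14 {P : Type*} [PartialOrder P] [Fintype P] (h31 : ThreePlusOneFree P)
    (T : PArray P) :
    (∀ (r : ℕ) (γ : P → ℕ), WeakAlignRow T r γ →
      (∀ γ', WeakAlignRow T r γ' → ∀ x, (InRow T r x ∨ InRow T (r + 1) x) → γ x ≤ γ' x) →
      ∀ x, InRow T (r + 1) x → ∃ y, InRow T r y ∧ γ y = γ x) ↔
    (∀ i j x, T.entry (i + 1) j = some x → ∃ y, T.entry i j = some y ∧ ¬ x < y) :=
  stmt_14_general T
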